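/- arXiv:2107.08493 — 3 statements merged into one kernel-verified Lean document; each statement's English description precedes it below -/
import Mathlib

section
/- Let z be a commutative E-algebra (E a field), R a z-algebra with z mapping into the center, and let M be an R-module that is z-finite, meaning M is the union of the submodules M_{J=0} over ideals J ⊆ z of finite codimension. Then M decomposes as the internal direct sum M = ⊕_{m ∈ Max(z)} M_m, where M_m = {x ∈ M : ∃ n ≥ 1, mⁿ·x = 0}, and each M_m is an R-submodule. -/
/-!
If `z ⧸ J` is Artinian, `J` contains a product of powers `mᵢ ^ eᵢ` of distinct maximal ideals.
These powers are pairwise coprime, so writing `1` as a sum of elements of the complementary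
products splits every element killed by `J` into pieces killed by single powers `mᵢ ^ eᵢ`.
Conversely, an element killed both by a power of `m` and by an ideal coprime to `m` is zero, and a
sum of elements of components at maximal ideals other than `m` is killed by such an ideal.
-/

open Ideal

theorem Ideal.exists_multiset_prod_le_of_isArtinianRing {z : Type*} [CommRing z] (J : Ideal z)
    [IsArtinianRing (z ⧸ J)] : ∃ Z : Multiset (Ideal z), (∀ m ∈ Z, m.IsMaximal) ∧ Z.prod ≤ J := by
  obtain ⟨Z, hZ⟩ := PrimeSpectrum.exists_primeSpectrum_prod_le (z ⧸ J) ⊥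
  refine ⟨Z.map fun p => p.asIdeal.comap (Quotient.mk J), ?_, ?_⟩
  · simp only [Multiset.mem_map]
    rintro _ ⟨p, -, rfl⟩
    exact comap_isMaximal_of_surjective _ Quotient.mk_surjective
  · refine le_trans ?_ (mk_ker (I := J)).le
    rw [RingHom.ker_eq_comap_bot, ← map_le_iff_le_comap,
      ← mapHom_apply, map_multiset_prod, Multiset.map_map]
    simpa [Function.comp_def, map_comap_of_surjective _ Quotient.mk_surjective] using hZ

section

variable {z : Type*} (R M : Type*) [CommRing z] [Ring R] [Algebra z R]
  [AddCommGroup M] [Module R M]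

/-- An `R`-submodule because `Algebra z R` forces the image of `z` to be central. -/
def idealTorsion (I : Ideal z) : Submodule R M where
  carrier := {x | ∀ a ∈ I, algebraMap z R a • x = 0}
  add_mem' hx hy a ha := by rw [smul_add, hx a ha, hy a ha, add_zero]
  zero_mem' _ _ := smul_zero _
  smul_mem' r x hx a ha := by rw [← mul_smul, Algebra.commutes, mul_smul, hx a ha, smul_zero]

variable {R M}

theorem idealTorsion_antitone : Antitone (idealTorsion R M (z := z)) :=
  fun _ _ hIJ _ hx a ha => hx a (hIJ ha)

theorem idealTorsion_top : idealTorsion R M (⊤ : Ideal z) = ⊥ :=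
  eq_bot_iff.2 fun x hx => by simpa using hx 1 trivial

theorem disjoint_idealTorsion {I J : Ideal z} (h : IsCoprime I J) :
    Disjoint (idealTorsion R M I) (idealTorsion R M J) := by
  obtain ⟨i, hi, j, hj, hij⟩ := isCoprime_iff_exists.1 h
  refine Submodule.disjoint_def.2 fun x hxI hxJ => ?_
  calc x = algebraMap z R (i + j) • x := by rw [hij, map_one, one_smul]
    _ = 0 := by rw [map_add, add_smul, hxI i hi, hxJ j hj, add_zero]

theorem idealTorsion_mul_le_sup {I J : Ideal z} (h : IsCoprime I J) :
    idealTorsion R M (I * J) ≤ idealTorsion R M I ⊔ idealTorsion R M J := by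
  obtain ⟨i, hi, j, hj, hij⟩ := isCoprime_iff_exists.1 h
  intro x hx
  have hsplit : x = algebraMap z R j • x + algebraMap z R i • x := by
    rw [← add_smul, ← map_add, add_comm, hij, map_one, one_smul]
  rw [hsplit]
  refine Submodule.add_mem_sup (fun a ha => ?_) (fun b hb => ?_)
  · rw [← mul_smul, ← map_mul]
    exact hx _ (mul_mem_mul ha hj)
  · rw [← mul_smul, ← map_mul, mul_comm]
    exact hx _ (mul_mem_mul hi hb)

theorem idealTorsion_prod_le_iSup {ι : Type*} {I : ι → Ideal z} (s : Finset ι)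
    (hs : (s : Set ι).Pairwise fun i j => IsCoprime (I i) (I j)) :
    idealTorsion R M (∏ i ∈ s, I i) ≤ ⨆ i ∈ s, idealTorsion R M (I i) := by
  classical
  induction s using Finset.induction_on with
  | empty => simp [idealTorsion_top]
  | insert i s hi ih =>
    have hcop : IsCoprime (I i) (∏ j ∈ s, I j) := IsCoprime.prod_right fun j hj =>
      hs (s.mem_insert_self i) (Finset.mem_insert_of_mem hj) (ne_of_mem_of_not_mem hj hi).symm
    rw [Finset.prod_insert hi, Finset.iSup_insert]
    exact (idealTorsion_mul_le_sup hcop).trans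
      (sup_le_sup_left (ih (hs.mono (s.coe_subset.2 (s.subset_insert i)))) _)

variable (R M) in
def submonoidTorsion (S : Submonoid (Ideal z)) : Submodule R M where
  carrier := {x | ∃ K ∈ S, x ∈ idealTorsion R M K}
  add_mem' := by
    rintro x y ⟨K, hK, hx⟩ ⟨L, hL, hy⟩
    exact ⟨K * L, S.mul_mem hK hL, add_mem (idealTorsion_antitone mul_le_left hx)
      (idealTorsion_antitone mul_le_right hy)⟩
  zero_mem' := ⟨1, S.one_mem, zero_mem _⟩
  smul_mem' r x := by
    rintro ⟨K, hK, hx⟩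
    exact ⟨K, hK, Submodule.smul_mem _ r hx⟩

theorem idealTorsion_le_submonoidTorsion {S : Submonoid (Ideal z)} {K : Ideal z} (hK : K ∈ S) :
    idealTorsion R M K ≤ submonoidTorsion R M S :=
  fun _ hx => ⟨K, hK, hx⟩

theorem submonoidTorsion_mono : Monotone (submonoidTorsion R M (z := z)) :=
  fun _ _ hST _ ⟨K, hK, hxK⟩ => ⟨K, hST hK, hxK⟩

theorem disjoint_submonoidTorsion {S T : Submonoid (Ideal z)}
    (h : ∀ I ∈ S, ∀ J ∈ T, IsCoprime I J) :
    Disjoint (submonoidTorsion R M S) (submonoidTorsion R M T) :=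
  Submodule.disjoint_def.2 fun _ ⟨I, hI, hxI⟩ ⟨J, hJ, hxJ⟩ =>
    Submodule.disjoint_def.1 (disjoint_idealTorsion (h I hI J hJ)) _ hxI hxJ

def Ideal.coprimeSubmonoid (I : Ideal z) : Submonoid (Ideal z) where
  carrier := {K | IsCoprime K I}
  mul_mem' := IsCoprime.mul_left
  one_mem' := isCoprime_one_left

variable (R M) in
def primaryComponent (m : Ideal z) : Submodule R M :=
  submonoidTorsion R M (Submonoid.powers m)

theorem mem_primaryComponent_iff {m : Ideal z} {x : M} :
    x ∈ primaryComponent R M m ↔ ∃ n, 1 ≤ n ∧ x ∈ idealTorsion R M (m ^ n) := by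
  constructor
  · rintro ⟨_, ⟨n, rfl⟩, hx⟩
    exact ⟨n + 1, Nat.le_add_left 1 n, idealTorsion_antitone (pow_le_pow_right n.le_succ) hx⟩
  · rintro ⟨n, -, hx⟩
    exact ⟨m ^ n, ⟨n, rfl⟩, hx⟩

theorem iSupIndep_primaryComponent :
    iSupIndep fun m : {m : Ideal z // m.IsMaximal} => primaryComponent R M m.1 := by
  refine iSupIndep_def.2 fun m =>
    (disjoint_submonoidTorsion (T := coprimeSubmonoid m.1) ?_).mono_right
      (iSup₂_le fun j hj => submonoidTorsion_mono (Submonoid.powers_le.2 ?_))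
  · rintro _ ⟨n, rfl⟩ K hK
    exact (IsCoprime.pow_right hK).symm
  · exact isCoprime_iff_sup_eq.2 (j.2.coprime_of_ne m.2 (Subtype.coe_ne_coe.2 hj))

theorem idealTorsion_le_iSup_primaryComponent (J : Ideal z) [IsArtinianRing (z ⧸ J)] :
    idealTorsion R M J ≤ ⨆ m : {m : Ideal z // m.IsMaximal}, primaryComponent R M m.1 := by
  classical
  obtain ⟨Z, hZmax, hZJ⟩ := J.exists_multiset_prod_le_of_isArtinianRing
  rw [Finset.prod_multiset_count] at hZJ
  refine (idealTorsion_antitone hZJ).trans ((idealTorsion_prod_le_iSup _ ?_).trans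
    (iSup₂_le fun m hm => ?_))
  · intro m hm m' hm' hne
    exact (isCoprime_iff_sup_eq.2 ((hZmax m (Multiset.mem_toFinset.1 hm)).coprime_of_ne
      (hZmax m' (Multiset.mem_toFinset.1 hm')) hne)).pow
  · exact le_iSup_of_le ⟨m, hZmax m (Multiset.mem_toFinset.1 hm)⟩
      (idealTorsion_le_submonoidTorsion ⟨_, rfl⟩)

end

theorem stmt2_general (E z R M : Type*) [Field E] [CommRing z] [Algebra E z]
    [Ring R] [Algebra z R]
    [AddCommGroup M] [Module R M]
    (hfin : ∀ x : M, ∃ J : Ideal z, FiniteDimensional E (z ⧸ J) ∧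
      ∀ a ∈ J, algebraMap z R a • x = 0) :
    ∃ Mm : {m : Ideal z // m.IsMaximal} → Submodule R M,
      (∀ m : {m : Ideal z // m.IsMaximal}, (Mm m : Set M) =
        {x : M | ∃ n : ℕ, 1 ≤ n ∧ ∀ a ∈ (m : Ideal z) ^ n,
          algebraMap z R a • x = 0}) ∧
      iSupIndep Mm ∧ (⨆ m, Mm m) = ⊤ := by
  refine ⟨fun m => primaryComponent R M m.1, fun m => Set.ext fun x => mem_primaryComponent_iff,
    iSupIndep_primaryComponent, eq_top_iff.2 fun x _ => ?_⟩
  obtain ⟨J, hJ, hxJ⟩ := hfin x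
  have : IsArtinianRing (z ⧸ J) := IsArtinianRing.of_finite E (z ⧸ J)
  exact idealTorsion_le_iSup_primaryComponent J hxJ

/-- A `z`-finite `R`-module (every element killed by an ideal of
finite codimension of the commutative `E`-algebra `z`, which maps into the
center of `R`) is the internal direct sum of its `m`-primary components over
the maximal ideals `m` of `z`, each of which is an `R`-submodule. -/
theorem stmt2 (E z R M : Type*) [Field E] [CommRing z] [Algebra E z]
    [Ring R] [Algebra z R]
    (hcentral : ∀ a : z, algebraMap z R a ∈ Set.center R)
    [AddCommGroup M] [Module R M]
    (hfin : ∀ x : M, ∃ J : Ideal z, FiniteDimensional E (z ⧸ J) ∧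
      ∀ a ∈ J, algebraMap z R a • x = 0) :
    ∃ Mm : {m : Ideal z // m.IsMaximal} → Submodule R M,
      (∀ m : {m : Ideal z // m.IsMaximal}, (Mm m : Set M) =
        {x : M | ∃ n : ℕ, 1 ≤ n ∧ ∀ a ∈ (m : Ideal z) ^ n,
          algebraMap z R a • x = 0}) ∧
      iSupIndep Mm ∧ (⨆ m, Mm m) = ⊤ :=
  stmt2_general E z R M hfin
end

section
/- The functor pr_m sending a z-finite R-module M to its m-primary component M_m is an exact functor on the category of z-finite R-modules: for any short exact sequence 0 → M' → M → M'' → 0 of z-finite R-modules, the induced sequence 0 → M'_m → M_m → M''_m → 0 is exact. -/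
/-- The `m`-primary component of an `R`-module, for an ideal `m` of the
commutative ring `z` acting through `R`. -/
def primarySet (z R M : Type*) [CommRing z] [Ring R] [Algebra z R]
    [AddCommGroup M] [Module R M] (m : Ideal z) : Set M :=
  {x : M | ∃ n : ℕ, 1 ≤ n ∧ ∀ a ∈ m ^ n, algebraMap z R a • x = 0}

/-- A `z`-finite module: every element is killed by an ideal of `z` of finite
codimension over the field `E`. -/
def IsZFinite (E z R M : Type*) [Field E] [CommRing z] [Algebra E z]
    [Ring R] [Algebra z R] [AddCommGroup M] [Module R M] : Prop :=
  ∀ x : M, ∃ J : Ideal z, FiniteDimensional E (z ⧸ J) ∧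
    ∀ a ∈ J, algebraMap z R a • x = 0

/-- Key algebraic lemma: if `z ⧸ J` is finite-dimensional over the field `E`,
then for any ideal `m` of `z` and any `n`, there is `t ∈ m ^ n` and `N ≥ 1`
with `m ^ N * (1 - t) ⊆ J`.  (This is the idempotent decomposition of the
Artinian ring `z ⧸ J`.) -/
lemma exists_primary_splitter (E z : Type*) [Field E] [CommRing z] [Algebra E z]
    (J : Ideal z) (hJ : FiniteDimensional E (z ⧸ J)) (m : Ideal z) (n : ℕ) :
    ∃ t ∈ m ^ n, ∃ N : ℕ, 1 ≤ N ∧ ∀ a ∈ m ^ N, a * (1 - t) ∈ J := by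
  classical
  haveI := hJ
  haveI : IsArtinian (z ⧸ J) (z ⧸ J) := isArtinian_of_tower E inferInstance
  haveI : IsNoetherianRing (z ⧸ J) := isNoetherian_of_tower E inferInstance
  set π : z →+* z ⧸ J := Ideal.Quotient.mk J with hπ
  set mb : Ideal (z ⧸ J) := m.map π with hmb
  -- the descending chain `mb ^ k` stabilizes
  obtain ⟨s, hs⟩ := IsArtinian.monotone_stabilizes
    (⟨fun k => OrderDual.toDual (mb ^ k), fun i j hij =>
      Ideal.pow_le_pow_right hij⟩ : ℕ →o (Ideal (z ⧸ J))ᵒᵈ)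
  set k : ℕ := max (max s 1) n with hk
  have hsk : s ≤ k := le_trans (le_max_left s 1) (le_max_left _ n)
  have hk1 : 1 ≤ k := le_trans (le_max_right s 1) (le_max_left _ n)
  have hnk : n ≤ k := le_max_right _ n
  set I : Ideal (z ⧸ J) := mb ^ k with hI
  have hidem : I = I * I := by
    have h1 : mb ^ s = mb ^ k := hs k hsk
    have h2 : mb ^ s = mb ^ (k + k) := hs (k + k) (le_trans hsk (Nat.le_add_right _ _))
    rw [hI, ← pow_add, ← h2, h1]
  obtain ⟨r, hr1, hr2⟩ :=
    Submodule.exists_sub_one_mem_and_smul_eq_zero_of_fg_of_le_smul I I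
      (IsNoetherian.noetherian I) (by rw [Ideal.smul_eq_mul]; exact le_of_eq hidem)
  -- `1 - r ∈ I`, lift it to `t ∈ m ^ k`
  have he : (1 : z ⧸ J) - r ∈ I := by
    have : -(r - 1) ∈ I := I.neg_mem hr1
    simpa using this
  have hIm : I = (m ^ k).map π := by rw [hI, hmb, Ideal.map_pow]
  rw [hIm] at he
  obtain ⟨t, htk, htπ⟩ :=
    (Ideal.mem_map_iff_of_surjective π Ideal.Quotient.mk_surjective).mp he
  refine ⟨t, Ideal.pow_le_pow_right hnk htk, k, hk1, fun a ha => ?_⟩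
  have hπa : π a ∈ I := by rw [hIm]; exact Ideal.mem_map_of_mem π ha
  have : π (a * (1 - t)) = 0 := by
    have hr2' : r • π a = 0 := hr2 (π a) hπa
    have : π (1 - t) = r := by
      have := htπ
      rw [map_sub, map_one]
      have : (1 : z ⧸ J) - ((1 : z ⧸ J) - r) = r := by ring
      rw [htπ]; exact this
    rw [map_mul, this, mul_comm]
    simpa using hr2'
  exact (Ideal.Quotient.eq_zero_iff_mem).mp this

/-- The functor `pr_m` (passage to the `m`-primary component) is
exact on `z`-finite `R`-modules: a short exact sequence `0 → M' → M → M'' → 0`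
induces a short exact sequence `0 → M'_m → M_m → M''_m → 0`. -/
theorem stmt5 (E z R M' M M'' : Type*) [Field E] [CommRing z] [Algebra E z]
    [Ring R] [Algebra z R]
    (hcentral : ∀ a : z, algebraMap z R a ∈ Set.center R)
    [AddCommGroup M'] [Module R M'] [AddCommGroup M] [Module R M]
    [AddCommGroup M''] [Module R M'']
    (hM'fin : IsZFinite E z R M') (hMfin : IsZFinite E z R M)
    (hM''fin : IsZFinite E z R M'')
    (f : M' →ₗ[R] M) (g : M →ₗ[R] M'')
    (hf : Function.Injective f) (hg : Function.Surjective g)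
    (hfg : ∀ x : M, g x = 0 ↔ ∃ y : M', f y = x)
    (m : Ideal z) (hm : m.IsMaximal) :
    (∀ y ∈ primarySet z R M' m, f y ∈ primarySet z R M m) ∧
    (∀ x ∈ primarySet z R M m, g x ∈ primarySet z R M'' m) ∧
    (∀ y ∈ primarySet z R M' m, f y = 0 → y = 0) ∧
    (∀ x ∈ primarySet z R M m, (g x = 0 ↔ ∃ y ∈ primarySet z R M' m, f y = x)) ∧
    (∀ x'' ∈ primarySet z R M'' m, ∃ x ∈ primarySet z R M m, g x = x'') := by
  refine ⟨?_, ?_, ?_, ?_, ?_⟩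
  · rintro y ⟨n, hn, hy⟩
    exact ⟨n, hn, fun a ha => by rw [← map_smul, hy a ha, map_zero]⟩
  · rintro x ⟨n, hn, hx⟩
    exact ⟨n, hn, fun a ha => by rw [← map_smul, hx a ha, map_zero]⟩
  · rintro y _ hy
    exact hf (by simpa using hy)
  · rintro x ⟨n, hn, hx⟩
    constructor
    · intro hgx
      obtain ⟨y, hy⟩ := (hfg x).mp hgx
      refine ⟨y, ⟨n, hn, fun a ha => ?_⟩, hy⟩
      apply hf
      rw [map_smul, hy, hx a ha, map_zero]
    · rintro ⟨y, _, hy⟩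
      exact (hfg x).mpr ⟨y, hy⟩
  · rintro x'' ⟨n, hn, hx''⟩
    obtain ⟨x, hx⟩ := hg x''
    obtain ⟨J, hJfd, hJkill⟩ := hMfin x
    obtain ⟨t, htm, N, hN1, hNt⟩ := exists_primary_splitter E z J hJfd m n
    refine ⟨algebraMap z R (1 - t) • x, ⟨N, hN1, fun a ha => ?_⟩, ?_⟩
    · rw [smul_smul, ← map_mul]
      exact hJkill _ (hNt a ha)
    · rw [map_smul, hx, map_sub, map_one, sub_smul, one_smul,
        hx'' t htm, sub_zero]
end

section
/- Let R → S be a morphism of z-algebras (with z central in both), M a z-finite R-module, and m a maximal ideal of z. Then the m-primary component commutes with base change: pr_m(S ⊗_R M) ≅ S ⊗_R pr_m(M) as S-modules. -/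
/-!
Every `x : M` is killed by an ideal `J` with `z ⧸ J` of finite length. There the powers of `m`
stabilise, and Nakayama's lemma gives `r ≡ 1 mod m` with `r • m ^ n ⊆ J`. Writing
`1 = (1 - r) ^ (n + 1) + r * g` splits `x` into the `m`-primary part `r g x` and the part
`(1 - r) ^ (n + 1) x`, which is killed by `r`. So `M = M_m ⊕ M'`, where `M'` consists of the
elements killed by some `c ≡ 1 mod m`; the sum is direct because `m ^ k` and `c` generate the
unit ideal. Tensoring with `S` keeps the decomposition, maps `M_m` into the `m`-primary part of
`S ⊗ M` and `M'` into the analogous part of `S ⊗ M`, and these two are again disjoint, so the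
`m`-primary part of `S ⊗ M` is exactly `S ⊗ M_m`.
-/

open TensorProduct

lemma exists_one_sub_pow_add_mul_eq_one {z : Type*} [CommRing z] (c : z) (k : ℕ) :
    ∃ g : z, (1 - c) ^ k + c * g = 1 := by
  obtain ⟨g, hg⟩ : c ∣ 1 - (1 - c) ^ k := by simpa using sub_dvd_pow_sub_pow 1 (1 - c) k
  exact ⟨g, by rw [← hg]; ring⟩

lemma IsArtinian.exists_sub_one_mem_and_mul_smul_eq_zero {z Q : Type*} [CommRing z]
    [AddCommGroup Q] [Module z Q] [IsArtinian z Q] [IsNoetherian z Q] (I : Ideal z) :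
    ∃ n : ℕ, ∃ r : z, r - 1 ∈ I ∧ ∀ a ∈ I ^ n, ∀ x : Q, (r * a) • x = 0 := by
  obtain ⟨n, hn⟩ := IsArtinian.monotone_stabilizes
    ⟨fun k ↦ OrderDual.toDual (I ^ k • ⊤ : Submodule z Q),
      fun _ _ hij ↦ Submodule.smul_mono_left (Ideal.pow_le_pow_right hij)⟩
  have hstable : I ^ n • (⊤ : Submodule z Q) ≤ I • I ^ n • ⊤ := by
    rw [← Submodule.mul_smul, ← pow_succ']
    exact le_of_eq (congrArg OrderDual.ofDual (hn (n + 1) n.le_succ))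
  obtain ⟨r, hr, hr0⟩ := Submodule.exists_sub_one_mem_and_smul_eq_zero_of_fg_of_le_smul I _
    (IsNoetherian.noetherian _) hstable
  exact ⟨n, r, hr, fun a ha x ↦ by
    rw [mul_smul]; exact hr0 _ (Submodule.smul_mem_smul ha trivial)⟩

section Primary

variable (z A N : Type*) [CommRing z] [Ring A] [Algebra z A] [AddCommGroup N] [Module A N]

def primarySubmodule (m : Ideal z) : Submodule A N where
  carrier := primarySet z A N m
  zero_mem' := ⟨1, le_rfl, fun _ _ ↦ smul_zero _⟩
  add_mem' := by
    rintro x y ⟨k, hk, hx⟩ ⟨l, -, hy⟩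
    refine ⟨max k l, hk.trans (le_max_left k l), fun a ha ↦ ?_⟩
    rw [smul_add, hx a (Ideal.pow_le_pow_right (le_max_left k l) ha),
      hy a (Ideal.pow_le_pow_right (le_max_right k l) ha), add_zero]
  smul_mem' := by
    rintro b x ⟨k, hk, hx⟩
    exact ⟨k, hk, fun a ha ↦ by rw [smul_smul, Algebra.commutes, mul_smul, hx a ha, smul_zero]⟩

/-- The elements killed by some `c ≡ 1 mod m`; for a `z`-finite module this is the sum of the
`m'`-primary components over the maximal ideals `m' ≠ m`. -/
def primaryComplement (m : Ideal z) : Submodule A N where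
  carrier := {x | ∃ c : z, 1 - c ∈ m ∧ algebraMap z A c • x = 0}
  zero_mem' := ⟨1, by simp, smul_zero _⟩
  add_mem' := by
    rintro x y ⟨c, hc, hx⟩ ⟨d, hd, hy⟩
    refine ⟨c * d, ?_, ?_⟩
    · rw [show 1 - c * d = (1 - c) + c * (1 - d) by ring]
      exact m.add_mem hc (m.mul_mem_left c hd)
    · have hcd : algebraMap z A (c * d) • x = 0 := by
        rw [mul_comm, map_mul, mul_smul, hx, smul_zero]
      rw [smul_add, hcd, map_mul, mul_smul, hy, smul_zero, add_zero]
  smul_mem' := by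
    rintro b x ⟨c, hc, hx⟩
    exact ⟨c, hc, by rw [smul_smul, Algebra.commutes, mul_smul, hx, smul_zero]⟩

variable {z A N}

lemma disjoint_primarySubmodule_primaryComplement (m : Ideal z) :
    Disjoint (primarySubmodule z A N m) (primaryComplement z A N m) := by
  rw [Submodule.disjoint_def]
  rintro x ⟨k, -, hk⟩ ⟨c, hc, hcx⟩
  obtain ⟨g, hg⟩ := exists_one_sub_pow_add_mul_eq_one c k
  calc x = algebraMap z A ((1 - c) ^ k + c * g) • x := by rw [hg, map_one, one_smul]
    _ = 0 := by
      rw [map_add, add_smul, hk _ (Ideal.pow_mem_pow hc k), mul_comm, map_mul, mul_smul, hcx,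
        smul_zero, add_zero]

lemma mem_primarySubmodule_sup_primaryComplement (m J : Ideal z) [IsArtinian z (z ⧸ J)]
    [IsNoetherian z (z ⧸ J)] {x : N} (hx : ∀ a ∈ J, algebraMap z A a • x = 0) :
    x ∈ primarySubmodule z A N m ⊔ primaryComplement z A N m := by
  obtain ⟨n, r, hr, hrJ⟩ := IsArtinian.exists_sub_one_mem_and_mul_smul_eq_zero (Q := z ⧸ J) m
  have hkill : ∀ a ∈ m ^ n, algebraMap z A (r * a) • x = 0 := fun a ha ↦
    hx _ (Ideal.Quotient.eq_zero_iff_mem.mp (by simpa [Algebra.smul_def] using hrJ a ha 1))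
  have hr' : 1 - r ∈ m := by simpa using m.neg_mem hr
  have hpow : m ^ (n + 1) ≤ m ^ n := Ideal.pow_le_pow_right n.le_succ
  obtain ⟨g, hg⟩ := exists_one_sub_pow_add_mul_eq_one r (n + 1)
  refine Submodule.mem_sup.mpr ⟨algebraMap z A (r * g) • x, ⟨n + 1, by omega, fun a ha ↦ ?_⟩,
    algebraMap z A ((1 - r) ^ (n + 1)) • x, ⟨r, hr', ?_⟩, ?_⟩
  · rw [← mul_smul, ← map_mul, show a * (r * g) = g * (r * a) by ring, map_mul, mul_smul,
      hkill a (hpow ha), smul_zero]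
  · rw [← mul_smul, ← map_mul, hkill _ (hpow (Ideal.pow_mem_pow hr' _))]
  · rw [← add_smul, ← map_add, add_comm, hg, map_one, one_smul]

end Primary

lemma eq_of_le_of_sup_eq_top_of_disjoint {α : Type*} [Lattice α] [BoundedOrder α]
    [IsModularLattice α] {a b p q : α} (hap : a ≤ p) (hbq : b ≤ q) (hab : a ⊔ b = ⊤)
    (hpq : Disjoint p q) : a = p := by
  refine le_antisymm hap ?_
  calc p = (a ⊔ b) ⊓ p := by rw [hab, top_inf_eq]
    _ = a ⊔ b ⊓ p := sup_inf_assoc_of_le b hap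
    _ ≤ a ⊔ q ⊓ p := sup_le_sup_left (inf_le_inf_right p hbq) a
    _ = a := by rw [hpq.symm.eq_bot, sup_bot_eq]

section TensorProduct

variable {R M : Type*} (N : Type*) [CommRing R] [AddCommGroup M] [Module R M] [AddCommGroup N]
  [Module R N]

lemma lTensor_subtype_injective_of_isCompl {P Q : Submodule R M} (h : IsCompl P Q) :
    Function.Injective (LinearMap.lTensor N P.subtype) := by
  refine Function.LeftInverse.injective (g := LinearMap.lTensor N (P.projectionOnto Q h)) ?_
  intro t
  rw [← LinearMap.comp_apply, ← LinearMap.lTensor_comp, Submodule.projectionOnto_comp_subtype,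
    LinearMap.lTensor_id, LinearMap.id_apply]

lemma range_lTensor_subtype_sup_eq_top_of_isCompl {P Q : Submodule R M} (h : IsCompl P Q) :
    LinearMap.range (LinearMap.lTensor N P.subtype) ⊔
      LinearMap.range (LinearMap.lTensor N Q.subtype) = ⊤ := by
  refine eq_top_iff.mpr fun t _ ↦ Submodule.mem_sup.mpr ?_
  have ht := congrArg (fun f ↦ LinearMap.lTensor N f t)
    (Submodule.projection_add_projection_eq_id h)
  simp only [LinearMap.lTensor_add, LinearMap.lTensor_id, LinearMap.add_apply, LinearMap.id_apply,
    Submodule.projection, LinearMap.lTensor_comp, LinearMap.comp_apply] at ht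
  exact ⟨_, ⟨_, rfl⟩, _, ⟨_, rfl⟩, ht⟩

variable {N} in
lemma range_lTensor_subtype_le {P : Submodule R M} {Q : Submodule R (N ⊗[R] M)}
    (h : ∀ n : N, ∀ y ∈ P, n ⊗ₜ y ∈ Q) : LinearMap.range (LinearMap.lTensor N P.subtype) ≤ Q := by
  rintro _ ⟨t, rfl⟩
  induction t using TensorProduct.induction_on with
  | zero => simp
  | tmul n y => exact h n y y.2
  | add t u ht hu => rw [map_add]; exact Q.add_mem ht hu

end TensorProduct

section BaseChange

variable {z R S M : Type*} [CommRing z] [CommRing R] [Algebra z R] [Ring S] [Algebra z S]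
  [Algebra R S] [IsScalarTower z R S] [AddCommGroup M] [Module R M]

lemma algebraMap_smul_tmul (a : z) (s : S) (y : M) :
    algebraMap z S a • (s ⊗ₜ[R] y) = s ⊗ₜ[R] (algebraMap z R a • y) := by
  rw [smul_tmul', smul_eq_mul, ← smul_tmul, Algebra.smul_def, ← IsScalarTower.algebraMap_apply]

lemma tmul_mem_primarySubmodule {m : Ideal z} {y : M} (hy : y ∈ primarySubmodule z R M m)
    (s : S) : s ⊗ₜ[R] y ∈ primarySubmodule z S (S ⊗[R] M) m := by
  obtain ⟨k, hk, hy⟩ := hy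
  exact ⟨k, hk, fun a ha ↦ by rw [algebraMap_smul_tmul, hy a ha, tmul_zero]⟩

lemma tmul_mem_primaryComplement {m : Ideal z} {y : M} (hy : y ∈ primaryComplement z R M m)
    (s : S) : s ⊗ₜ[R] y ∈ primaryComplement z S (S ⊗[R] M) m := by
  obtain ⟨c, hc, hy⟩ := hy
  exact ⟨c, hc, by rw [algebraMap_smul_tmul, hy, tmul_zero]⟩

end BaseChange

theorem stmt6_general (E z R S M : Type*) [Field E] [CommRing z] [Algebra E z]
    [CommRing R] [Algebra z R] [Ring S] [Algebra z S] [Algebra R S]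
    [IsScalarTower z R S]
    [AddCommGroup M] [Module R M]
    (hfin : ∀ x : M, ∃ J : Ideal z, FiniteDimensional E (z ⧸ J) ∧
      ∀ a ∈ J, algebraMap z R a • x = 0)
    (m : Ideal z)
    (Mm : Submodule R M) (hMm : (Mm : Set M) = primarySet z R M m) :
    Function.Injective ⇑(LinearMap.lTensor S Mm.subtype) ∧
    Set.range ⇑(LinearMap.lTensor S Mm.subtype)
      = primarySet z S (S ⊗[R] M) m := by
  obtain rfl : Mm = primarySubmodule z R M m := SetLike.coe_injective hMm
  have hcompl : IsCompl (primarySubmodule z R M m) (primaryComplement z R M m) := by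
    refine ⟨disjoint_primarySubmodule_primaryComplement m,
      codisjoint_iff.mpr (eq_top_iff.mpr fun x _ ↦ ?_)⟩
    obtain ⟨J, hJ, hJx⟩ := hfin x
    have := isArtinian_of_tower (S := z) E (inferInstance : IsArtinian E (z ⧸ J))
    have := isNoetherian_of_tower (S := z) E (inferInstance : IsNoetherian E (z ⧸ J))
    exact mem_primarySubmodule_sup_primaryComplement m J hJx
  refine ⟨lTensor_subtype_injective_of_isCompl S hcompl, ?_⟩
  have hrange := eq_of_le_of_sup_eq_top_of_disjoint
    (range_lTensor_subtype_le fun s _ hy ↦ tmul_mem_primarySubmodule hy s)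
    (range_lTensor_subtype_le fun s _ hy ↦ tmul_mem_primaryComplement hy s)
    (range_lTensor_subtype_sup_eq_top_of_isCompl S hcompl)
    ((Submodule.disjoint_restrictScalars_iff R).mpr
      (disjoint_primarySubmodule_primaryComplement (A := S) (N := S ⊗[R] M) m))
  rw [← LinearMap.coe_range, hrange]
  rfl

/-- For a morphism of `z`-algebras `R → S` and a `z`-finite
`R`-module `M`, the `m`-primary component commutes with base change:
the natural map `S ⊗_R pr_m(M) → S ⊗_R M` is injective with image exactly
the `m`-primary component of `S ⊗_R M`, i.e. `pr_m(S ⊗_R M) ≅ S ⊗_R pr_m(M)`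
as `S`-modules. -/
theorem stmt6 (E z R S M : Type*) [Field E] [CommRing z] [Algebra E z]
    [CommRing R] [Algebra z R] [Ring S] [Algebra z S] [Algebra R S]
    [IsScalarTower z R S]
    [AddCommGroup M] [Module R M]
    (hfin : ∀ x : M, ∃ J : Ideal z, FiniteDimensional E (z ⧸ J) ∧
      ∀ a ∈ J, algebraMap z R a • x = 0)
    (m : Ideal z) (hm : m.IsMaximal)
    (Mm : Submodule R M) (hMm : (Mm : Set M) = primarySet z R M m) :
    Function.Injective ⇑(LinearMap.lTensor S Mm.subtype) ∧
    Set.range ⇑(LinearMap.lTensor S Mm.subtype)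
      = primarySet z S (S ⊗[R] M) m :=
  stmt6_general E z R S M hfin m Mm hMm
end
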